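/- arXiv:2403.16148 — 2 statements merged into one kernel-verified Lean document; each statement's English description precedes it below -/
import Mathlib

section
/- Let $0<\mu'<2$ and $k\in\mathbb{R}$. Then there exists $C>0$ such that for all $x,y\in\mathbb{R}^n$ and all $\xi\in\mathbb{R}^n$, $\langle x\rangle^{k} \le C\,\big(1+\langle \xi\rangle^2\langle x\rangle^{-\mu'}|x-y|^2\big)^{|k|/(2-\mu')}\,\langle y\rangle^{k}$. -/
open Real

lemma rat_bound (a b c k : ℝ) (ha : 0 < a) (hb : 0 < b) (hc : 1 ≤ c)
    (hab : a ≤ c * b) (hba : b ≤ c * a) : a ^ k ≤ c ^ |k| * b ^ k := by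
  have hc0 : 0 < c := lt_of_lt_of_le one_pos hc
  rcases le_or_gt 0 k with hk | hk
  · rw [abs_of_nonneg hk]
    calc a ^ k ≤ (c * b) ^ k := Real.rpow_le_rpow ha.le hab hk
      _ = c ^ k * b ^ k := Real.mul_rpow hc0.le hb.le
  · rw [abs_of_neg hk]
    have hba' : b / c ≤ a := (div_le_iff₀ hc0).2 (by linarith)
    calc a ^ k ≤ (b / c) ^ k := Real.rpow_le_rpow_of_nonpos (by positivity) hba' hk.le
      _ = b ^ k / c ^ k := Real.div_rpow hb.le hc0.le k
      _ = c ^ (-k) * b ^ k := by rw [Real.rpow_neg hc0.le]; field_simp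

lemma exp_eq (m x : ℝ) (hm : m ≠ 0) : m / 2 * (x / m) = x / 2 := by
  field_simp

lemma key (μ' k a b t d : ℝ) (h1 : 0 < μ') (h2 : μ' < 2)
    (ha : 1 ≤ a) (hb : 1 ≤ b) (ht : 1 ≤ t) (hd : 0 ≤ d)
    (hab : a ≤ b + d) (hba : b ≤ a + d)
    (hP1 : a ^ 2 ≤ 2 * b ^ 2 * (1 + d ^ 2)) (hP2 : b ^ 2 ≤ 2 * a ^ 2 * (1 + d ^ 2)) :
    a ^ k ≤ (2 ^ |k| * 20 ^ (|k| / (2 - μ'))) *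
      (1 + t ^ 2 * a ^ (-μ') * d ^ 2) ^ (|k| / (2 - μ')) * b ^ k := by
  have ha0 : (0:ℝ) < a := lt_of_lt_of_le one_pos ha
  have hb0 : (0:ℝ) < b := lt_of_lt_of_le one_pos hb
  have hμ : (0:ℝ) < 2 - μ' := by linarith
  set e : ℝ := |k| / (2 - μ') with he_def
  have he : 0 ≤ e := div_nonneg (abs_nonneg k) hμ.le
  set A : ℝ := 1 + t ^ 2 * a ^ (-μ') * d ^ 2 with hA_def
  have hA : 1 ≤ A := by
    have : 0 ≤ t ^ 2 * a ^ (-μ') * d ^ 2 := by positivity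
    simp [hA_def]; linarith
  have hA0 : (0:ℝ) < A := lt_of_lt_of_le one_pos hA
  have h20e : (1:ℝ) ≤ 20 ^ e := by
    calc (1:ℝ) = 20 ^ (0:ℝ) := (Real.rpow_zero _).symm
      _ ≤ 20 ^ e := Real.rpow_le_rpow_of_exponent_le (by norm_num) he
  have hAe : (1:ℝ) ≤ A ^ e := by
    calc (1:ℝ) = A ^ (0:ℝ) := (Real.rpow_zero _).symm
      _ ≤ A ^ e := Real.rpow_le_rpow_of_exponent_le hA he
  have hbk : (0:ℝ) < b ^ k := Real.rpow_pos_of_pos hb0 k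
  rcases le_total (2 * d) a with hcase | hcase
  · -- small d case
    have r := rat_bound a b 2 k ha0 hb0 one_le_two (by linarith) (by linarith)
    have h2k : (0:ℝ) < (2:ℝ) ^ |k| := Real.rpow_pos_of_pos two_pos _
    calc a ^ k ≤ 2 ^ |k| * b ^ k := r
      _ = 2 ^ |k| * b ^ k * 1 := (mul_one _).symm
      _ ≤ 2 ^ |k| * b ^ k * (20 ^ e * A ^ e) := by
          apply mul_le_mul_of_nonneg_left _ (by positivity)
          nlinarith
      _ = 2 ^ |k| * 20 ^ e * A ^ e * b ^ k := by ring
  · -- large d case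
    have hd2 : (1:ℝ)/2 ≤ d := by linarith
    have hd0 : (0:ℝ) < d := by linarith
    set c : ℝ := Real.sqrt (2 * (1 + d ^ 2)) with hc_def
    have hcsq : c ^ 2 = 2 * (1 + d ^ 2) := Real.sq_sqrt (by positivity)
    have hc0 : (0:ℝ) < c := Real.sqrt_pos.2 (by positivity)
    have hc1 : (1:ℝ) ≤ c := by nlinarith
    have hacb : a ≤ c * b := by
      have hs : a ^ 2 ≤ (c * b) ^ 2 := by
        calc a ^ 2 ≤ 2 * b ^ 2 * (1 + d ^ 2) := hP1
          _ = (c * b) ^ 2 := by rw [mul_pow, hcsq]; ring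
      have := Real.sqrt_le_sqrt hs
      rwa [Real.sqrt_sq ha0.le, Real.sqrt_sq (by positivity)] at this
    have hbca : b ≤ c * a := by
      have hs : b ^ 2 ≤ (c * a) ^ 2 := by
        calc b ^ 2 ≤ 2 * a ^ 2 * (1 + d ^ 2) := hP2
          _ = (c * a) ^ 2 := by rw [mul_pow, hcsq]; ring
      have := Real.sqrt_le_sqrt hs
      rwa [Real.sqrt_sq hb0.le, Real.sqrt_sq (by positivity)] at this
    have r := rat_bound a b c k ha0 hb0 hc1 hacb hbca
    -- c ^ |k| = 2^(|k|/2) * (1+d^2)^(|k|/2)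
    have hcrw : c ^ |k| = 2 ^ (|k|/2) * (1 + d ^ 2) ^ (|k|/2) := by
      rw [hc_def, Real.sqrt_eq_rpow, ← Real.rpow_mul (by positivity),
        show (1/2) * |k| = |k|/2 from by ring,
        Real.mul_rpow (by norm_num) (by positivity)]
    have hs0 : (0:ℝ) ≤ (2 - μ') / 2 := by linarith
    have hdp : (0:ℝ) ≤ d ^ ((2:ℝ) - μ') := Real.rpow_nonneg hd _
    have s4 : ((d:ℝ) ^ 2) ^ ((2 - μ') / 2) = d ^ ((2:ℝ) - μ') := by
      rw [← Real.rpow_natCast d 2, ← Real.rpow_mul hd]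
      congr 1
      push_cast
      ring
    have hfive : (1 + d ^ 2) ^ ((2 - μ') / 2) ≤ 5 * d ^ ((2:ℝ) - μ') := by
      have h5 : 1 + d ^ 2 ≤ 5 * d ^ 2 := by nlinarith
      have s1 : (1 + d ^ 2) ^ ((2 - μ') / 2) ≤ (5 * d ^ 2) ^ ((2 - μ') / 2) :=
        Real.rpow_le_rpow (by positivity) h5 hs0
      have s2 : ((5:ℝ) * d ^ 2) ^ ((2 - μ') / 2) = 5 ^ ((2 - μ') / 2) * (d ^ 2) ^ ((2 - μ') / 2) :=
        Real.mul_rpow (by norm_num) (by positivity)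
      have s3 : (5:ℝ) ^ ((2 - μ') / 2) ≤ 5 := by
        calc (5:ℝ) ^ ((2 - μ') / 2) ≤ 5 ^ (1:ℝ) :=
              Real.rpow_le_rpow_of_exponent_le (by norm_num) (by linarith)
          _ = 5 := Real.rpow_one 5
      rw [s2, s4] at s1
      have : (5:ℝ) ^ ((2 - μ') / 2) * d ^ ((2:ℝ) - μ') ≤ 5 * d ^ ((2:ℝ) - μ') :=
        mul_le_mul_of_nonneg_right s3 hdp
      linarith
    have low : (1/4 : ℝ) * d ^ ((2:ℝ) - μ') ≤ t ^ 2 * a ^ (-μ') * d ^ 2 := by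
      have e1 : ((2:ℝ) * d) ^ (-μ') ≤ a ^ (-μ') :=
        Real.rpow_le_rpow_of_nonpos ha0 hcase (by linarith)
      have e2 : ((2:ℝ) * d) ^ (-μ') = 2 ^ (-μ') * d ^ (-μ') := Real.mul_rpow (by norm_num) hd
      have e3 : (1/4 : ℝ) ≤ (2:ℝ) ^ (-μ') := by
        have h24 : (2:ℝ) ^ (-2:ℝ) = 1/4 := by
          rw [show (-2:ℝ) = ((-2:ℤ):ℝ) by norm_num, Real.rpow_intCast]; norm_num
        calc (1/4 : ℝ) = 2 ^ (-2:ℝ) := h24.symm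
          _ ≤ 2 ^ (-μ') := Real.rpow_le_rpow_of_exponent_le one_le_two (by linarith)
      have e4 : d ^ (-μ') * d ^ 2 = d ^ ((2:ℝ) - μ') := by
        rw [← Real.rpow_natCast d 2, ← Real.rpow_add hd0]
        congr 1
        push_cast
        ring
      have q1 : (1/4 : ℝ) * d ^ ((2:ℝ) - μ') ≤ 2 ^ (-μ') * d ^ (-μ') * d ^ 2 := by
        rw [mul_assoc, e4]; exact mul_le_mul_of_nonneg_right e3 hdp
      have q2 : (2:ℝ) ^ (-μ') * d ^ (-μ') * d ^ 2 ≤ a ^ (-μ') * d ^ 2 := by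
        rw [← e2]; exact mul_le_mul_of_nonneg_right e1 (by positivity)
      have ht2 : (1:ℝ) ≤ t ^ 2 := one_le_pow₀ ht
      have q3 : a ^ (-μ') * d ^ 2 ≤ t ^ 2 * a ^ (-μ') * d ^ 2 := by
        have hpos : (0:ℝ) ≤ a ^ (-μ') * d ^ 2 := by positivity
        calc a ^ (-μ') * d ^ 2 = 1 * (a ^ (-μ') * d ^ 2) := (one_mul _).symm
          _ ≤ t ^ 2 * (a ^ (-μ') * d ^ 2) := mul_le_mul_of_nonneg_right ht2 hpos
          _ = t ^ 2 * a ^ (-μ') * d ^ 2 := by ring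
      linarith [q1, q2, q3]
    have hkey : (1 + d ^ 2) ^ ((2 - μ') / 2) ≤ 20 * A := by
      have : 20 * A = 20 + 20 * (t ^ 2 * a ^ (-μ') * d ^ 2) := by rw [hA_def]; ring
      linarith [hfive, low, this]
    have u1 : (2:ℝ) ^ (|k|/2) ≤ 2 ^ |k| :=
      Real.rpow_le_rpow_of_exponent_le one_le_two (by linarith [abs_nonneg k])
    have u2 : (1 + d ^ 2) ^ (|k|/2) = ((1 + d ^ 2) ^ ((2 - μ') / 2)) ^ e := by
      rw [← Real.rpow_mul (by positivity)]
      congr 1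
      rw [he_def]
      exact (exp_eq _ _ hμ.ne').symm
    have u3 : ((1 + d ^ 2) ^ ((2 - μ') / 2)) ^ e ≤ (20 * A) ^ e :=
      Real.rpow_le_rpow (by positivity) hkey he
    have u4 : ((20:ℝ) * A) ^ e = 20 ^ e * A ^ e := Real.mul_rpow (by norm_num) hA0.le
    have hce : c ^ |k| ≤ 2 ^ |k| * (20 ^ e * A ^ e) := by
      rw [hcrw, u2]
      exact mul_le_mul u1 (u3.trans_eq u4) (by positivity) (by positivity)
    calc a ^ k ≤ c ^ |k| * b ^ k := r
      _ ≤ (2 ^ |k| * (20 ^ e * A ^ e)) * b ^ k := mul_le_mul_of_nonneg_right hce hbk.le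
      _ = 2 ^ |k| * 20 ^ e * A ^ e * b ^ k := by ring

/-- Japanese bracket `⟨x⟩ = (1+|x|²)^{1/2}`. -/
noncomputable def jb {n : ℕ} (x : EuclideanSpace ℝ (Fin n)) : ℝ :=
  Real.sqrt (1 + ‖x‖ ^ 2)

lemma one_le_jb {n : ℕ} (x : EuclideanSpace ℝ (Fin n)) : 1 ≤ jb x := by
  calc (1:ℝ) = Real.sqrt 1 := by simp
    _ ≤ Real.sqrt (1 + ‖x‖ ^ 2) := Real.sqrt_le_sqrt (by nlinarith [sq_nonneg ‖x‖])
    _ = jb x := rfl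

lemma jb_sq {n : ℕ} (x : EuclideanSpace ℝ (Fin n)) : jb x ^ 2 = 1 + ‖x‖ ^ 2 :=
  Real.sq_sqrt (by positivity)

lemma norm_le_jb {n : ℕ} (x : EuclideanSpace ℝ (Fin n)) : ‖x‖ ≤ jb x := by
  calc ‖x‖ = Real.sqrt (‖x‖ ^ 2) := (Real.sqrt_sq (norm_nonneg x)).symm
    _ ≤ Real.sqrt (1 + ‖x‖ ^ 2) := Real.sqrt_le_sqrt (by linarith)
    _ = jb x := rfl

lemma jb_triangle {n : ℕ} (x y : EuclideanSpace ℝ (Fin n)) :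
    jb x ≤ jb y + ‖x - y‖ := by
  have hx : ‖x‖ ≤ ‖y‖ + ‖x - y‖ := by
    have h := norm_add_le y (x - y)
    have h2 : y + (x - y) = x := by abel
    rwa [h2] at h
  have hsq : 1 + ‖x‖ ^ 2 ≤ (jb y + ‖x - y‖) ^ 2 := by
    have := jb_sq y
    have := norm_le_jb y
    nlinarith [norm_nonneg (x - y), norm_nonneg y, norm_nonneg x]
  calc jb x = Real.sqrt (1 + ‖x‖ ^ 2) := rfl
    _ ≤ Real.sqrt ((jb y + ‖x - y‖) ^ 2) := Real.sqrt_le_sqrt hsq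
    _ = jb y + ‖x - y‖ := Real.sqrt_sq (by
        have h1 := one_le_jb y
        have h2 := norm_nonneg (x - y)
        linarith)

lemma jb_peetre {n : ℕ} (x y : EuclideanSpace ℝ (Fin n)) :
    jb x ^ 2 ≤ 2 * jb y ^ 2 * (1 + ‖x - y‖ ^ 2) := by
  rw [jb_sq, jb_sq]
  have hx : ‖x‖ ≤ ‖y‖ + ‖x - y‖ := by
    have h := norm_add_le y (x - y)
    have h2 : y + (x - y) = x := by abel
    rwa [h2] at h
  nlinarith [norm_nonneg (x - y), norm_nonneg y, norm_nonneg x,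
    sq_nonneg (‖y‖ - ‖x - y‖), sq_nonneg (‖y‖ * ‖x - y‖)]

theorem stmt1 {n : ℕ} (μ' k : ℝ) (h1 : 0 < μ') (h2 : μ' < 2) :
    ∃ C > (0 : ℝ), ∀ x y ξ : EuclideanSpace ℝ (Fin n),
      jb x ^ k ≤
        C * (1 + jb ξ ^ 2 * jb x ^ (-μ') * ‖x - y‖ ^ 2) ^ (|k| / (2 - μ')) * jb y ^ k := by
  refine ⟨2 ^ |k| * 20 ^ (|k| / (2 - μ')), by positivity, fun x y ξ => ?_⟩
  have h := key μ' k (jb x) (jb y) (jb ξ) ‖x - y‖ h1 h2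
    (one_le_jb x) (one_le_jb y) (one_le_jb ξ) (norm_nonneg _)
    (jb_triangle x y)
    (by have := jb_triangle y x; rwa [norm_sub_rev] at this)
    (jb_peetre x y)
    (by have := jb_peetre y x; rwa [norm_sub_rev] at this)
  exact h
end

section
/- Let $n\ge 1$, $m>0$, $k$ a positive integer, and let $p_0\in C^\infty(\mathbb{R}^n;[0,\infty))$ satisfy: (a) $|\partial_\xi^\beta p_0(\xi)|\le C_\beta\langle\xi\rangle^{2m-|\beta|}$ for all multi-indices $\beta$, (b) $p_0(\xi)\ge c\langle\xi\rangle^{2m}$ for $|\xi|\ge 1$, (c) $c'|\xi|^{2k}\le p_0(\xi)\le c''|\xi|^{2k}$ for $|\xi|\le 1$. Let $0<\mu<2k$, $\mu'=\mu/k$, and let $V\in C^\infty(\mathbb{R}^n;\mathbb{R})$ satisfy $|\partial_x^\alpha V(x)|\le C_\alpha\langle x\rangle^{-\mu-|\alpha|}$ and $V(x)\ge C_1\langle x\rangle^{-\mu}$. Set $p(x,\xi)=p_0(\xi)+V(x)$. Then for all multi-indices $\alpha,\beta$ there exist constants $C_{\alpha\beta}$ such that for all $(x,\xi)\in\mathbb{R}^{2n}$: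 $|\partial_x^\alpha\partial_\xi^\beta p(x,\xi)| \le C_{\alpha\beta}\, p(x,\xi)\, \langle x\rangle^{\frac{\mu'}{2}|\beta|-|\alpha|}\,\langle\xi\rangle^{-|\beta|}$. -/
/-- Partial derivative in the `i`-th coordinate direction. -/
noncomputable def pdE {n : ℕ} (i : Fin n) (f : EuclideanSpace ℝ (Fin n) → ℝ) :
    EuclideanSpace ℝ (Fin n) → ℝ :=
  fun x => fderiv ℝ f x (EuclideanSpace.single i 1)

/-- Iterated partial derivative `∂^α` given by a list of coordinate directions. -/
noncomputable def pdsE {n : ℕ} (L : List (Fin n)) (f : EuclideanSpace ℝ (Fin n) → ℝ) :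
    EuclideanSpace ℝ (Fin n) → ℝ :=
  L.foldr pdE f

/-- Directional derivative on the phase space `ℝⁿ × ℝⁿ`. -/
noncomputable def pdP {n : ℕ} (v : EuclideanSpace ℝ (Fin n) × EuclideanSpace ℝ (Fin n))
    (f : EuclideanSpace ℝ (Fin n) × EuclideanSpace ℝ (Fin n) → ℝ) :
    EuclideanSpace ℝ (Fin n) × EuclideanSpace ℝ (Fin n) → ℝ :=
  fun q => fderiv ℝ f q v

/-- Iterated mixed partial derivative `∂_x^α ∂_ξ^β` on the phase space. -/
noncomputable def pdsP {n : ℕ} (L : List (EuclideanSpace ℝ (Fin n) × EuclideanSpace ℝ (Fin n)))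
    (f : EuclideanSpace ℝ (Fin n) × EuclideanSpace ℝ (Fin n) → ℝ) :
    EuclideanSpace ℝ (Fin n) × EuclideanSpace ℝ (Fin n) → ℝ :=
  L.foldr pdP f

namespace Aux19
variable {n : ℕ}
local notation "E" => EuclideanSpace ℝ (Fin n)


lemma contDiff_pdE {f : E → ℝ} (hf : ContDiff ℝ (⊤ : ℕ∞) f) (i : Fin n) : ContDiff ℝ (⊤ : ℕ∞) (pdE i f) := by
  have h1 : ContDiff ℝ (⊤ : ℕ∞) (fderiv ℝ f) := hf.fderiv_right (by simp)
  exact ((ContinuousLinearMap.apply ℝ ℝ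
    (EuclideanSpace.single i 1 : E)).contDiff.comp h1 : _)

lemma pdsE_cons (i : Fin n) (L : List (Fin n)) (f : E → ℝ) :
    pdsE (i :: L) f = pdE i (pdsE L f) := rfl

lemma pdsE_append (L₁ L₂ : List (Fin n)) (f : E → ℝ) :
    pdsE (L₁ ++ L₂) f = pdsE L₁ (pdsE L₂ f) := by
  simp [pdsE, List.foldr_append]

lemma contDiff_pdsE {f : E → ℝ} (hf : ContDiff ℝ (⊤ : ℕ∞) f) (L : List (Fin n)) :
    ContDiff ℝ (⊤ : ℕ∞) (pdsE L f) := by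
  induction L with
  | nil => exact hf
  | cons i L ih => exact contDiff_pdE ih i

lemma contDiff_pdP {f : E × E → ℝ} (hf : ContDiff ℝ (⊤ : ℕ∞) f) (v : E × E) :
    ContDiff ℝ (⊤ : ℕ∞) (pdP v f) := by
  have h1 : ContDiff ℝ (⊤ : ℕ∞) (fderiv ℝ f) := hf.fderiv_right (by simp)
  exact ((ContinuousLinearMap.apply ℝ ℝ v).contDiff.comp h1 : _)

lemma contDiff_pdsP {f : E × E → ℝ} (hf : ContDiff ℝ (⊤ : ℕ∞) f) (M : List (E × E)) :
    ContDiff ℝ (⊤ : ℕ∞) (pdsP M f) := by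
  induction M with
  | nil => exact hf
  | cons v M ih => exact contDiff_pdP ih v

lemma pdsP_append (M₁ M₂ : List (E × E)) (f : E × E → ℝ) :
    pdsP (M₁ ++ M₂) f = pdsP M₁ (pdsP M₂ f) := by
  simp [pdsP, List.foldr_append]

lemma pdP_comp (g : E → ℝ) (hg : Differentiable ℝ g) (T : (E × E) →L[ℝ] E) (v : E × E) :
    pdP v (fun q => g (T q)) = fun q => fderiv ℝ g (T q) (T v) := by
  funext q
  have h : HasFDerivAt (fun q : E × E => g (T q)) ((fderiv ℝ g (T q)).comp T) q :=
    (hg (T q)).hasFDerivAt.comp q T.hasFDerivAt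
  simp only [pdP, h.fderiv]
  rfl

lemma pdsP_comp (g : E → ℝ) (hg : ContDiff ℝ (⊤ : ℕ∞) g) (T : (E × E) →L[ℝ] E)
    (emb : Fin n → E × E) (hemb : ∀ i, T (emb i) = EuclideanSpace.single i 1)
    (L : List (Fin n)) :
    pdsP (L.map emb) (fun q => g (T q)) = fun q => pdsE L g (T q) := by
  induction L with
  | nil => rfl
  | cons i L ih =>
    show pdP (emb i) (pdsP (L.map emb) fun q => g (T q)) = _
    rw [ih, pdP_comp (pdsE L g) ((contDiff_pdsE hg L).differentiable (by simp)) T (emb i)]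
    funext q
    rw [pdsE_cons, hemb]
    rfl

lemma pdP_zero_fun (v : E × E) : pdP v (fun _ : E × E => (0:ℝ)) = fun _ => 0 := by
  funext q
  simp [pdP]

lemma pdsP_comp_zero (g : E → ℝ) (hg : ContDiff ℝ (⊤ : ℕ∞) g) (T : (E × E) →L[ℝ] E)
    (emb : Fin n → E × E) (hemb : ∀ i, T (emb i) = 0) (L : List (Fin n)) (hL : L ≠ []) :
    pdsP (L.map emb) (fun q => g (T q)) = fun _ => 0 := by
  induction L with
  | nil => simp at hL
  | cons i L ih =>
    show pdP (emb i) (pdsP (L.map emb) fun q => g (T q)) = _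
    cases L with
    | nil =>
      show pdP (emb i) (fun q => g (T q)) = _
      rw [pdP_comp g (hg.differentiable (by simp)) T (emb i)]
      funext q
      rw [hemb]
      simp
    | cons j L' =>
      rw [ih (by simp)]
      exact pdP_zero_fun _

lemma pdsP_add (f g : E × E → ℝ) (hf : ContDiff ℝ (⊤ : ℕ∞) f) (hg : ContDiff ℝ (⊤ : ℕ∞) g)
    (M : List (E × E)) :
    pdsP M (fun q => f q + g q) = fun q => pdsP M f q + pdsP M g q := by
  induction M with
  | nil => rfl
  | cons v M ih =>
    show pdP v (pdsP M fun q => f q + g q) = _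
    rw [ih]
    funext q
    show fderiv ℝ (fun q => pdsP M f q + pdsP M g q) q v = _
    rw [fderiv_fun_add (((contDiff_pdsP hf M).differentiable (by simp)) q)
      (((contDiff_pdsP hg M).differentiable (by simp)) q)]
    rfl



/-- forward difference operator -/
noncomputable def dd (i : Fin n) (h : ℝ) (f : E → ℝ) : E → ℝ :=
  fun ξ => f (ξ + h • EuclideanSpace.single i 1) - f ξ

noncomputable def dds (L : List (Fin n)) (h : ℝ) (f : E → ℝ) : E → ℝ :=
  L.foldr (fun i => dd i h) f

lemma dds_cons (i : Fin n) (L : List (Fin n)) (h : ℝ) (f : E → ℝ) :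
    dds (i :: L) h f = dd i h (dds L h f) := rfl

lemma contDiff_dd {f : E → ℝ} (hf : ContDiff ℝ (⊤ : ℕ∞) f) (i : Fin n) (h : ℝ) :
    ContDiff ℝ (⊤ : ℕ∞) (dd i h f) :=
  (hf.comp (contDiff_id.add contDiff_const)).sub hf

lemma contDiff_dds {f : E → ℝ} (hf : ContDiff ℝ (⊤ : ℕ∞) f) (L : List (Fin n)) (h : ℝ) :
    ContDiff ℝ (⊤ : ℕ∞) (dds L h f) := by
  induction L with
  | nil => exact hf
  | cons i L ih => exact contDiff_dd ih i h

lemma dds_bound (h : ℝ) (hh : 0 ≤ h) :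
    ∀ (L : List (Fin n)) (f : E → ℝ) (ξ : E) (A : ℝ),
    (∀ η : E, ‖η - ξ‖ ≤ L.length * h → |f η| ≤ A) →
    |dds L h f ξ| ≤ 2 ^ L.length * A := by
  intro L
  induction L with
  | nil =>
    intro f ξ A hA
    simpa [dds] using hA ξ (by simp)
  | cons i L ih =>
    intro f ξ A hA
    have e1 : ‖(h • EuclideanSpace.single i 1 : E)‖ = h := by
      rw [norm_smul, EuclideanSpace.norm_single]
      simp [abs_of_nonneg hh]
    have h1 : |dds L h f (ξ + h • EuclideanSpace.single i 1)| ≤ 2 ^ L.length * A := by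
      apply ih
      intro η hη
      apply hA
      have : η - ξ = (η - (ξ + h • EuclideanSpace.single i 1)) + h • EuclideanSpace.single i 1 := by
        abel
      rw [this]
      have hle := norm_add_le (η - (ξ + h • EuclideanSpace.single i 1))
        (h • EuclideanSpace.single i 1 : E)
      rw [e1] at hle
      refine hle.trans ?_
      simp only [List.length_cons]
      push_cast
      nlinarith
    have h2 : |dds L h f ξ| ≤ 2 ^ L.length * A := by
      apply ih
      intro η hη
      apply hA
      refine hη.trans ?_
      simp only [List.length_cons]
      push_cast
      nlinarith
    rw [dds_cons]
    calc |dds L h f (ξ + h • EuclideanSpace.single i 1) - dds L h f ξ|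
        ≤ |dds L h f (ξ + h • EuclideanSpace.single i 1)| + |dds L h f ξ| := abs_sub _ _
      _ ≤ 2 ^ L.length * A + 2 ^ L.length * A := add_le_add h1 h2
      _ = 2 ^ (i :: L).length * A := by rw [List.length_cons]; ring

lemma hasDerivAt_line (f : E → ℝ) (hf : Differentiable ℝ f) (ξ v : E) (t : ℝ) :
    HasDerivAt (fun s : ℝ => f (ξ + s • v)) (fderiv ℝ f (ξ + t • v) v) t := by
  have hψ : HasDerivAt (fun s : ℝ => ξ + s • v) v t := by
    simpa using ((hasDerivAt_id t).smul_const v).const_add ξ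
  exact (hf (ξ + t • v)).hasFDerivAt.comp_hasDerivAt t hψ

lemma dd_eq_integral {f : E → ℝ} (hf : ContDiff ℝ (⊤ : ℕ∞) f) (i : Fin n) (h : ℝ) (ξ : E) :
    dd i h f ξ = ∫ t in (0:ℝ)..h, pdE i f (ξ + t • EuclideanSpace.single i 1) := by
  have hcont : Continuous fun t : ℝ => pdE i f (ξ + t • EuclideanSpace.single i 1) :=
    (contDiff_pdE hf i).continuous.comp
      (continuous_const.add (continuous_id.smul continuous_const))
  have key : (∫ t in (0:ℝ)..h, pdE i f (ξ + t • EuclideanSpace.single i 1))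
      = f (ξ + h • EuclideanSpace.single i 1) - f (ξ + (0:ℝ) • EuclideanSpace.single i 1) :=
    intervalIntegral.integral_eq_sub_of_hasDerivAt
      (fun t _ => hasDerivAt_line f (hf.differentiable (by simp)) ξ (EuclideanSpace.single i 1) t)
      (hcont.intervalIntegrable _ _)
  rw [key]
  simp [dd]

lemma pdE_dd_comm {f : E → ℝ} (hf : ContDiff ℝ (⊤ : ℕ∞) f) (i j : Fin n) (h : ℝ) :
    pdE j (dd i h f) = dd i h (pdE j f) := by
  funext ξ
  set c : E := h • EuclideanSpace.single i 1
  have h1 : HasFDerivAt (fun η : E => f (η + c)) (fderiv ℝ f (ξ + c)) ξ := by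
    exact (hf.differentiable (by simp) (ξ + c)).hasFDerivAt.comp ξ
      ((hasFDerivAt_id ξ).add_const c)
  show fderiv ℝ (fun η : E => f (η + c) - f η) ξ (EuclideanSpace.single j 1) = _
  rw [fderiv_fun_sub h1.differentiableAt (hf.differentiable (by simp) ξ)]
  rw [ContinuousLinearMap.sub_apply, h1.fderiv]
  rfl

lemma pdE_dds_comm {f : E → ℝ} (hf : ContDiff ℝ (⊤ : ℕ∞) f) (L : List (Fin n)) (j : Fin n) (h : ℝ) :
    pdE j (dds L h f) = dds L h (pdE j f) := by
  induction L with
  | nil => rfl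
  | cons i L ih =>
    rw [dds_cons, pdE_dd_comm (contDiff_dds hf L h) i j h, ih, dds_cons]


lemma dds_sub_pdsE (h : ℝ) (hh : 0 ≤ h) :
    ∀ (L : List (Fin n)) (f : E → ℝ), ContDiff ℝ (⊤ : ℕ∞) f → ∀ (ξ : E) (K : ℝ),
    (∀ M : List (Fin n), M.length = L.length + 1 →
      ∀ η : E, ‖η - ξ‖ ≤ (L.length + 1) * h → |pdsE M f η| ≤ K) →
    |dds L h f ξ - h ^ L.length * pdsE L.reverse f ξ| ≤ L.length * h ^ (L.length + 1) * K := by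
  intro L
  induction L with
  | nil =>
    intro f hf ξ K hK
    simp [dds, pdsE]
  | cons i L ih =>
    intro f hf ξ K hK
    set e : E := EuclideanSpace.single i 1 with he
    set b : ℕ := L.length with hb
    set g : E → ℝ := pdE i f with hg
    have hgs : ContDiff ℝ (⊤ : ℕ∞) g := contDiff_pdE hf i
    have hKnn : 0 ≤ K := by
      have := hK (List.replicate (b + 2) i) (by simp [hb]) ξ (by simp; positivity)
      exact (abs_nonneg _).trans this
    -- rewrite dds as an integral
    have step1 : dds (i :: L) h f ξ = ∫ t in (0:ℝ)..h, dds L h g (ξ + t • e) := by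
      rw [dds_cons, dd_eq_integral (contDiff_dds hf L h) i h ξ]
      congr 1
      funext t
      rw [pdE_dds_comm hf L i h]
    -- rewrite the derivative term
    have step2 : pdsE (i :: L).reverse f = pdsE L.reverse g := by
      rw [List.reverse_cons, pdsE_append]
      rfl
    have hcont1 : Continuous fun t : ℝ => dds L h g (ξ + t • e) :=
      (contDiff_dds hgs L h).continuous.comp
        (continuous_const.add (continuous_id.smul continuous_const))
    have hint : dds (i :: L) h f ξ - h ^ (i :: L).length * pdsE (i :: L).reverse f ξ
        = ∫ t in (0:ℝ)..h, (dds L h g (ξ + t • e) - h ^ b * pdsE L.reverse g ξ) := by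
      rw [intervalIntegral.integral_sub (hcont1.intervalIntegrable _ _)
        (intervalIntegrable_const), intervalIntegral.integral_const, step1, step2]
      simp only [List.length_cons, smul_eq_mul]
      ring_nf
      rfl
    rw [hint]
    -- pointwise bound on the integrand
    have hbound : ∀ t ∈ Set.uIoc (0:ℝ) h,
        ‖dds L h g (ξ + t • e) - h ^ b * pdsE L.reverse g ξ‖ ≤ (b + 1) * h ^ (b + 1) * K := by
      intro t ht
      rw [Set.uIoc_of_le hh] at ht
      obtain ⟨ht0, hth⟩ := ht
      have hte : ‖(t • e : E)‖ = t := by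
        rw [norm_smul, EuclideanSpace.norm_single]
        simp [abs_of_nonneg ht0.le]
      -- inner hypothesis for g at base point ξ + t • e
      have hK' : ∀ M : List (Fin n), M.length = b + 1 →
          ∀ η : E, ‖η - (ξ + t • e)‖ ≤ (b + 1) * h → |pdsE M g η| ≤ K := by
        intro M hM η hη
        have : pdsE M g η = pdsE (M ++ [i]) f η := by rw [pdsE_append]; rfl
        rw [this]
        apply hK (M ++ [i]) (by simp [hM, hb]) η
        have hd : η - ξ = (η - (ξ + t • e)) + t • e := by abel
        rw [hd]
        have := norm_add_le (η - (ξ + t • e)) (t • e : E)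
        rw [hte] at this
        refine this.trans ?_
        simp only [List.length_cons]
        push_cast
        nlinarith
      have h1 : |dds L h g (ξ + t • e) - h ^ b * pdsE L.reverse g (ξ + t • e)|
          ≤ b * h ^ (b + 1) * K := ih g hgs (ξ + t • e) K hK'
      -- MVT-type bound for the base point shift
      have h2 : |pdsE L.reverse g (ξ + t • e) - pdsE L.reverse g ξ| ≤ K * t := by
        have hFi : (pdsE L.reverse g (ξ + t • e) - pdsE L.reverse g ξ)
            = ∫ u in (0:ℝ)..t, pdE i (pdsE L.reverse g) (ξ + u • e) := by
          have := dd_eq_integral (contDiff_pdsE hgs L.reverse) i t ξ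
          rw [← this]
          rfl
        rw [hFi, ← Real.norm_eq_abs]
        have := intervalIntegral.norm_integral_le_of_norm_le_const
          (C := K) (f := fun u => pdE i (pdsE L.reverse g) (ξ + u • e)) (a := 0) (b := t) ?_
        · simpa [abs_of_nonneg ht0.le] using this
        · intro u hu
          rw [Set.uIoc_of_le ht0.le] at hu
          have hue : ‖(u • e : E)‖ = u := by
            rw [norm_smul, EuclideanSpace.norm_single]
            simp [abs_of_nonneg hu.1.le]
          show |pdE i (pdsE L.reverse g) (ξ + u • e)| ≤ K
          have : pdE i (pdsE L.reverse g) (ξ + u • e) = pdsE (i :: L.reverse) g (ξ + u • e) := rfl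
          rw [this]
          apply hK' (i :: L.reverse) (by simp [hb])
          have hd : (ξ + u • e) - (ξ + t • e) = (u - t) • e := by
            rw [sub_smul]; abel
          rw [hd, norm_smul, EuclideanSpace.norm_single]
          simp only [norm_one, mul_one, Real.norm_eq_abs]
          rw [abs_of_nonpos (by nlinarith [hu.1.le, hu.2])]
          have hbh : (0:ℝ) ≤ (b + 1 : ℝ) * h := by positivity
          nlinarith [hu.1.le, hu.2]
      calc ‖dds L h g (ξ + t • e) - h ^ b * pdsE L.reverse g ξ‖
          ≤ |dds L h g (ξ + t • e) - h ^ b * pdsE L.reverse g (ξ + t • e)|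
            + |h ^ b * pdsE L.reverse g (ξ + t • e) - h ^ b * pdsE L.reverse g ξ| := by
            rw [Real.norm_eq_abs]
            exact abs_sub_le _ _ _
        _ ≤ b * h ^ (b + 1) * K + h ^ b * (K * t) := by
            gcongr
            rw [← mul_sub, abs_mul, abs_of_nonneg (pow_nonneg hh b)]
            exact mul_le_mul_of_nonneg_left h2 (pow_nonneg hh b)
        _ ≤ (b + 1) * h ^ (b + 1) * K := by
            have : h ^ b * (K * t) ≤ h ^ b * (K * h) := by
              apply mul_le_mul_of_nonneg_left _ (pow_nonneg hh b)
              exact mul_le_mul_of_nonneg_left hth hKnn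
            have hpow : h ^ b * (K * h) = h ^ (b + 1) * K := by ring
            nlinarith [pow_nonneg hh (b+1)]
    have := intervalIntegral.norm_integral_le_of_norm_le_const hbound
    rw [Real.norm_eq_abs] at this
    refine this.trans ?_
    rw [sub_zero, abs_of_nonneg hh]
    simp only [List.length_cons]
    push_cast
    ring_nf
    nlinarith [pow_nonneg hh (b+1), hKnn]




set_option maxHeartbeats 2000000 in
lemma landau (k : ℕ) (hk : 0 < k) (c'' : ℝ) (hc'' : 0 < c'')
    (p0 : E → ℝ) (hp0 : ContDiff ℝ (⊤ : ℕ∞) p0) (hp0nonneg : ∀ ξ, 0 ≤ p0 ξ)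
    (hup : ∀ ξ : E, ‖ξ‖ ≤ 1 → p0 ξ ≤ c'' * ‖ξ‖ ^ (2 * k))
    (K0 : ℝ) (hK0 : 0 < K0)
    (hK : ∀ L : List (Fin n), L.length = 2 * k → ∀ ξ : E, ‖ξ‖ ≤ 1 → |pdsE L p0 ξ| ≤ K0) :
    ∀ j : ℕ, ∃ C > (0:ℝ), ∀ L : List (Fin n), L.length + j = 2 * k →
      ∀ ξ : E, ‖ξ‖ ≤ (4:ℝ)⁻¹ ^ j → |pdsE L p0 ξ| ≤ C * ‖ξ‖ ^ j := by
  intro j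
  induction j with
  | zero =>
    refine ⟨K0, hK0, fun L hL ξ hξ => ?_⟩
    simpa using hK L (by omega) ξ (by simpa using hξ)
  | succ j ih =>
    obtain ⟨C', hC'0, hC'⟩ := ih
    have hr1 : ((4:ℝ)⁻¹) ^ (j+1) ≤ (4:ℝ)⁻¹ ^ j := by
      apply pow_le_pow_of_le_one (by norm_num) (by norm_num) (by omega)
    have hrj1 : ((4:ℝ)⁻¹) ^ j ≤ 1 := pow_le_one₀ (by norm_num) (by norm_num)
    refine ⟨2^(4*k)*c''*(2*k+1)^(2*k) + 3^j * C' + c'', by positivity, ?_⟩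
    intro L hL ξ hξ
    by_cases hb0 : L = []
    · -- L empty : then j + 1 = 2k, use the upper bound on p0 itself
      subst hb0
      simp only [List.length_nil, Nat.zero_add, zero_add] at hL
      have h1 : |pdsE [] p0 ξ| = p0 ξ := abs_of_nonneg (hp0nonneg ξ)
      have h2 : p0 ξ ≤ c'' * ‖ξ‖ ^ (2*k) := hup ξ (hξ.trans (hr1.trans hrj1))
      rw [h1, hL]
      have ht : (0:ℝ) ≤ ‖ξ‖ ^ (2*k) := by positivity
      nlinarith [mul_nonneg (by positivity : (0:ℝ) ≤ 2^(4*k)*c''*(2*(k:ℝ)+1)^(2*k)) ht,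
        mul_nonneg (mul_nonneg (by positivity : (0:ℝ) ≤ (3:ℝ)^j) hC'0.le) ht]
    · set b : ℕ := L.length with hb
      have hb1 : 1 ≤ b := by
        cases L with
        | nil => simp at hb0
        | cons a l => simp [hb]
      have hbk : b + (j + 1) = 2 * k := hL
      -- key estimate for arbitrary step size h
      have key : ∀ h : ℝ, 0 < h → ‖ξ‖ + (b+1)*h ≤ (4:ℝ)⁻¹ ^ j →
          h^b * |pdsE L p0 ξ| ≤
            2^b * (c'' * (‖ξ‖ + b*h)^(2*k)) + b * h^(b+1) * (C' * (‖ξ‖ + (b+1)*h)^j) := by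
        intro h hh hrad
        have hbh : (0:ℝ) ≤ b * h := by positivity
        have comp := dds_sub_pdsE h hh.le L.reverse p0 hp0 ξ (C' * (‖ξ‖ + (b+1)*h)^j) ?_
        · have bnd := dds_bound h hh.le L.reverse p0 ξ (c'' * (‖ξ‖ + b*h)^(2*k)) ?_
          · rw [List.reverse_reverse, List.length_reverse] at comp
            rw [List.length_reverse] at bnd
            have tri : h^b * |pdsE L p0 ξ| = |h^b * pdsE L p0 ξ| := by
              rw [abs_mul, abs_of_nonneg (by positivity : (0:ℝ) ≤ h^b)]
            rw [tri]
            calc |h^b * pdsE L p0 ξ|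
                ≤ |dds L.reverse h p0 ξ - h ^ b * pdsE L p0 ξ| + |dds L.reverse h p0 ξ| := by
                  have := abs_sub_abs_le_abs_sub (h ^ b * pdsE L p0 ξ) (dds L.reverse h p0 ξ)
                  have h2 := abs_sub_comm (h ^ b * pdsE L p0 ξ) (dds L.reverse h p0 ξ)
                  linarith [abs_sub_abs_le_abs_sub (h ^ b * pdsE L p0 ξ) (dds L.reverse h p0 ξ)]
              _ ≤ b * h^(b+1) * (C' * (‖ξ‖ + (b+1)*h)^j) + 2^b * (c'' * (‖ξ‖ + b*h)^(2*k)) := by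
                  exact add_le_add comp bnd
              _ = _ := by ring
          · intro η hη
            rw [List.length_reverse] at hη
            have h1 : ‖η‖ ≤ ‖ξ‖ + b * h := by
              have := norm_add_le (η - ξ) ξ
              simp only [sub_add_cancel] at this
              linarith
            have h2 : ‖η‖ ≤ 1 := by
              refine h1.trans (le_trans ?_ (hrad.trans hrj1))
              have : (b:ℝ) * h ≤ (b+1) * h := by nlinarith
              linarith
            have := hup η h2
            rw [abs_of_nonneg (hp0nonneg η)]
            refine this.trans ?_
            have : ‖η‖ ^ (2*k) ≤ (‖ξ‖ + b*h)^(2*k) :=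
              pow_le_pow_left₀ (norm_nonneg _) h1 _
            nlinarith
        · intro M hM η hη
          rw [List.length_reverse] at hM hη
          have h1 : ‖η‖ ≤ ‖ξ‖ + (b+1) * h := by
            have := norm_add_le (η - ξ) ξ
            simp only [sub_add_cancel] at this
            push_cast at hη ⊢
            linarith
          have h2 : ‖η‖ ≤ (4:ℝ)⁻¹ ^ j := h1.trans hrad
          have := hC' M (by omega) η h2
          refine this.trans ?_
          have : ‖η‖ ^ j ≤ (‖ξ‖ + (b+1)*h)^j := pow_le_pow_left₀ (norm_nonneg _) h1 _
          nlinarith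
      by_cases hξ0 : ξ = 0
      · -- at the origin : let h → 0
        subst hξ0
        simp only [norm_zero]
        rw [zero_pow (by omega : j + 1 ≠ 0), mul_zero]
        set D : ℝ := 2^b * c'' * (b:ℝ)^(2*k) + b * C' * ((b:ℝ)+1)^j with hD
        have hDpos : 0 < D := by positivity
        have hsmall : ∀ h : ℝ, 0 < h → (b+1)*h ≤ (4:ℝ)⁻¹ ^ j →
            |pdsE L p0 0| ≤ D * h^(j+1) := by
          intro h hh hcond
          have := key h hh (by simpa using hcond)
          have hRHS : 2^b * (c'' * (‖(0:E)‖ + b*h)^(2*k)) + b * h^(b+1) * (C' * (‖(0:E)‖ + (b+1)*h)^j)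
              = (D * h^(j+1)) * h^b := by
            simp only [norm_zero, zero_add]
            rw [mul_pow, mul_pow, hD]
            have e1 : h ^ (2*k) = h^(j+1) * h^b := by
              rw [← pow_add]; congr 1; omega
            have e2 : h ^ (b+1) * h ^ j = h ^ (j+1) * h ^ b := by
              rw [← pow_add, ← pow_add]; congr 1; omega
            calc 2^b * (c'' * ((b:ℝ)^(2*k) * h^(2*k))) + b * h^(b+1) * (C' * (((b:ℝ)+1)^j * h^j))
                = 2^b * c'' * (b:ℝ)^(2*k) * h^(2*k) + (b * C' * ((b:ℝ)+1)^j) * (h^(b+1) * h^j) := by ring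
              _ = _ := by rw [e1, e2]; ring
          rw [hRHS] at this
          exact le_of_mul_le_mul_right (by linarith [this]) (pow_pos hh b)
        by_contra hcon
        push_neg at hcon
        obtain ⟨h, hh1, hh2⟩ := exists_pos_mul_lt (show (0:ℝ) < |pdsE L p0 0| / D by positivity) 1
        -- choose small h
        set h0 : ℝ := min (((4:ℝ)⁻¹ ^ j) / (b+1)) (min 1 (|pdsE L p0 0| / (2*D))) with hh0
        have hh0pos : 0 < h0 := by
          apply lt_min (by positivity) (lt_min one_pos (by positivity))
        have hc1 : (b+1)*h0 ≤ (4:ℝ)⁻¹ ^ j := by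
          have : h0 ≤ ((4:ℝ)⁻¹ ^ j) / (b+1) := min_le_left _ _
          rw [le_div_iff₀ (by positivity)] at this
          linarith
        have := hsmall h0 hh0pos hc1
        have hh01 : h0 ≤ 1 := le_trans (min_le_right _ _) (min_le_left _ _)
        have hh02 : h0 ≤ |pdsE L p0 0| / (2*D) := le_trans (min_le_right _ _) (min_le_right _ _)
        have hpow : h0^(j+1) ≤ h0 := by
          apply pow_le_of_le_one hh0pos.le hh01 (by omega)
        have : |pdsE L p0 0| ≤ D * h0 := by
          refine this.trans ?_
          exact mul_le_mul_of_nonneg_left hpow hDpos.le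
        rw [le_div_iff₀ (by positivity)] at hh02
        nlinarith [abs_nonneg (pdsE L p0 0), hcon]
      · -- away from the origin : h = ‖ξ‖ / b
        have hs : 0 < ‖ξ‖ := norm_pos_iff.2 hξ0
        set s := ‖ξ‖ with hsdef
        set B : ℝ := (b:ℝ) with hBdef
        have hB1 : 1 ≤ B := by rw [hBdef]; exact_mod_cast hb1
        have hB0 : 0 < B := by linarith
        have hh : 0 < s / B := by positivity
        have hfrac : (B+1) * (s/B) ≤ 2 * s := by
          have he : (B+1) * (s/B) = ((B+1)*s)/B := by field_simp
          rw [he, div_le_iff₀ hB0]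
          nlinarith
        have hrad : s + (b+1)*(s/B) ≤ (4:ℝ)⁻¹ ^ j := by
          have h3 : s + (b+1)*(s/B) ≤ 3 * s := by push_cast; linarith
          refine h3.trans ?_
          have : s ≤ (4:ℝ)⁻¹ ^ (j+1) := hξ
          have h4 : (3:ℝ) * (4:ℝ)⁻¹ ^ (j+1) ≤ (4:ℝ)⁻¹ ^ j := by
            rw [pow_succ]
            nlinarith [pow_pos (show (0:ℝ) < 4⁻¹ by norm_num) j]
          linarith
        have hkey := key (s/B) hh (by push_cast; push_cast at hrad; exact hrad)
        have hBs : (b:ℝ) * (s/B) = s := by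
          rw [hBdef]; field_simp
        have e2s : s + (b:ℝ)*(s/B) = 2 * s := by rw [hBs]; ring
        have e3s : s + ((b:ℝ)+1)*(s/B) ≤ 3 * s := by
          push_cast
          have : ((b:ℝ)+1)*(s/B) ≤ 2*s := by push_cast at hfrac; exact hfrac
          linarith
        -- bound the RHS of hkey
        have hRHS : 2^b * (c'' * (s + b*(s/B))^(2*k)) + b * (s/B)^(b+1) * (C' * (s + (b+1)*(s/B))^j)
            ≤ (2^(b+2*k) * c'' * B^b + 3^j * C') * s^(j+1) * (s/B)^b := by
          have t1 : (s + (b:ℝ)*(s/B))^(2*k) = 2^(2*k) * s^(2*k) := by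
            rw [e2s, mul_pow]
          have t2 : (s + ((b:ℝ)+1)*(s/B))^j ≤ 3^j * s^j := by
            calc (s + ((b:ℝ)+1)*(s/B))^j ≤ (3*s)^j := by
                  apply pow_le_pow_left₀ (by positivity) e3s
              _ = 3^j * s^j := mul_pow _ _ _
          have hsb : (s/B)^b = s^b / B^b := div_pow s B b
          have t3 : (b:ℝ) * (s/B)^(b+1) = (s/B)^b * s := by
            rw [pow_succ]
            rw [hBdef] at *
            field_simp
          have hs2k : s^(2*k) = s^(j+1) * s^b := by rw [← pow_add]; congr 1; omega
          have hsb0 : (0:ℝ) < (s/B)^b := by positivity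
          calc 2^b * (c'' * (s + b*(s/B))^(2*k)) + b * (s/B)^(b+1) * (C' * (s + (b+1)*(s/B))^j)
              ≤ 2^b * (c'' * (2^(2*k) * s^(2*k))) + ((s/B)^b * s) * (C' * (3^j * s^j)) := by
                push_cast
                rw [t1] at *
                push_cast at t3
                rw [t3]
                have hnn : (0:ℝ) ≤ (s/B)^b * s := by positivity
                have := mul_le_mul_of_nonneg_left t2 (mul_pos hsb0 hs).le
                nlinarith [mul_pos hsb0 hs, hC'0]
            _ = 2^(b+2*k) * c'' * (s^(j+1) * s^b) + 3^j * C' * s^(j+1) * ((s/B)^b * s^b / s^b) := by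
                rw [hs2k, pow_add]
                field_simp
                ring
            _ ≤ (2^(b+2*k) * c'' * B^b + 3^j * C') * s^(j+1) * (s/B)^b := by
                rw [hsb]
                have hsb' : s^b ≠ 0 := by positivity
                field_simp
                norm_num
        have hfin : (s/B)^b * |pdsE L p0 ξ| ≤ (2^(b+2*k) * c'' * B^b + 3^j * C') * s^(j+1) * (s/B)^b := by
          refine hkey.trans ?_
          push_cast
          push_cast at hRHS
          exact hRHS
        have hcancel : |pdsE L p0 ξ| ≤ (2^(b+2*k) * c'' * B^b + 3^j * C') * s^(j+1) := by
          have hp : (0:ℝ) < (s/B)^b := by positivity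
          by_contra hcon
          push_neg at hcon
          have h5 := mul_lt_mul_of_pos_left hcon hp
          have heq : (2^(b+2*k) * c'' * B^b + 3^j * C') * s^(j+1) * (s/B)^b
              = (s/B)^b * ((2^(b+2*k) * c'' * B^b + 3^j * C') * s^(j+1)) := by ring
          rw [heq] at hfin
          linarith
        refine hcancel.trans ?_
        have hcoef : 2^(b+2*k) * c'' * B^b + 3^j * C' ≤ 2^(4*k)*c''*(2*(k:ℝ)+1)^(2*k) + 3^j * C' + c'' := by
          have hbk2 : b ≤ 2*k := by omega
          have c1 : (2:ℝ)^(b+2*k) ≤ 2^(4*k) := by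
            apply pow_le_pow_right₀ (by norm_num)
            omega
          have c2 : B^b ≤ (2*(k:ℝ)+1)^(2*k) := by
            calc B^b ≤ (2*(k:ℝ)+1)^b := by
                  apply pow_le_pow_left₀ hB0.le
                  rw [hBdef]
                  push_cast
                  have : (b:ℝ) ≤ 2*k := by exact_mod_cast hbk2
                  linarith
              _ ≤ (2*(k:ℝ)+1)^(2*k) := by
                  apply pow_le_pow_right₀ (by push_cast; linarith [Nat.one_le_iff_ne_zero.2 (by omega : k ≠ 0)]) hbk2
          have h1 : (0:ℝ) < 2^(b+2*k) := by positivity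
          have h2 : (0:ℝ) < B^b := by positivity
          have c3 : (2:ℝ)^(b+2*k) * B^b ≤ 2^(4*k) * (2*(k:ℝ)+1)^(2*k) :=
            mul_le_mul c1 c2 h2.le (by positivity)
          nlinarith [mul_le_mul_of_nonneg_left c3 hc''.le]
        have hsp : (0:ℝ) ≤ s^(j+1) := by positivity
        nlinarith


lemma one_le_jb (x : E) : 1 ≤ jb x := by
  have h : (1:ℝ) ≤ 1 + ‖x‖^2 := by nlinarith [sq_nonneg ‖x‖]
  calc (1:ℝ) = Real.sqrt 1 := Real.sqrt_one.symm
    _ ≤ Real.sqrt (1 + ‖x‖^2) := Real.sqrt_le_sqrt h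
    _ = jb x := rfl

lemma jb_pos (x : E) : 0 < jb x := lt_of_lt_of_le one_pos (one_le_jb x)

lemma norm_le_jb (x : E) : ‖x‖ ≤ jb x := by
  calc ‖x‖ = Real.sqrt (‖x‖^2) := (Real.sqrt_sq (norm_nonneg x)).symm
    _ ≤ Real.sqrt (1 + ‖x‖^2) := Real.sqrt_le_sqrt (by nlinarith)
    _ = jb x := rfl

lemma jb_le_sqrt_two {x : E} (hx : ‖x‖ ≤ 1) : jb x ≤ Real.sqrt 2 := by
  rw [jb]
  apply Real.sqrt_le_sqrt
  nlinarith [norm_nonneg x]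

lemma one_le_sqrt_two : (1:ℝ) ≤ Real.sqrt 2 := by
  rw [show (1:ℝ) = Real.sqrt 1 by rw [Real.sqrt_one]]
  exact Real.sqrt_le_sqrt (by norm_num)

/-- bound for `jb x ^ e` when `‖x‖ ≤ 1` -/
lemma jb_rpow_le {x : E} (hx : ‖x‖ ≤ 1) (e : ℝ) : jb x ^ e ≤ Real.sqrt 2 ^ |e| := by
  rcases le_or_gt 0 e with he | he
  · calc jb x ^ e ≤ Real.sqrt 2 ^ e :=
          Real.rpow_le_rpow (jb_pos x).le (jb_le_sqrt_two hx) he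
      _ ≤ Real.sqrt 2 ^ |e| :=
          Real.rpow_le_rpow_of_exponent_le one_le_sqrt_two (le_abs_self e)
  · calc jb x ^ e ≤ 1 := Real.rpow_le_one_of_one_le_of_nonpos (one_le_jb x) he.le
      _ ≤ Real.sqrt 2 ^ |e| := by
          rw [show (1:ℝ) = Real.sqrt 2 ^ (0:ℝ) by rw [Real.rpow_zero]]
          exact Real.rpow_le_rpow_of_exponent_le one_le_sqrt_two (abs_nonneg e)

/-- uniform version of the symbol bounds over all lists of a given length -/
lemma uniform_bound (m : ℝ) (p0 : E → ℝ)
    (ha : ∀ L : List (Fin n), ∃ C > (0:ℝ), ∀ ξ,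
      |pdsE L p0 ξ| ≤ C * jb ξ ^ (2 * m - (L.length : ℝ))) (j : ℕ) :
    ∃ K > (0:ℝ), ∀ L : List (Fin n), L.length = j → ∀ ξ : E,
      |pdsE L p0 ξ| ≤ K * jb ξ ^ (2 * m - (j : ℝ)) := by
  choose C hCpos hbound using ha
  refine ⟨1 + ∑ v : Fin j → Fin n, C (List.ofFn v), by
    have : (0:ℝ) ≤ ∑ v : Fin j → Fin n, C (List.ofFn v) :=
      Finset.sum_nonneg fun v _ => (hCpos _).le
    linarith, ?_⟩
  intro L hL ξ
  subst hL
  have hv : List.ofFn L.get = L := List.ofFn_get L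
  have hle : C L ≤ 1 + ∑ v : Fin L.length → Fin n, C (List.ofFn v) := by
    have h1 := Finset.single_le_sum (f := fun v : Fin L.length → Fin n => C (List.ofFn v))
      (fun v _ => (hCpos _).le) (Finset.mem_univ L.get)
    simp only [List.ofFn_get] at h1
    linarith
  exact (hbound L ξ).trans (mul_le_mul_of_nonneg_right hle (Real.rpow_nonneg (jb_pos ξ).le _))



lemma pdsP_value (p0 V : E → ℝ) (hp0 : ContDiff ℝ (⊤ : ℕ∞) p0) (hV : ContDiff ℝ (⊤ : ℕ∞) V)
    (Lx Lξ : List (Fin n)) (x ξ : E) :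
    pdsP ((Lx.map fun i => ((EuclideanSpace.single i 1 : E), (0 : E))) ++
        (Lξ.map fun i => ((0 : E), (EuclideanSpace.single i 1 : E))))
      (fun q => p0 q.2 + V q.1) (x, ξ)
    = if Lξ = [] then (if Lx = [] then p0 ξ + V x else pdsE Lx V x)
      else (if Lx = [] then pdsE Lξ p0 ξ else 0) := by
  set T1 := ContinuousLinearMap.fst ℝ (EuclideanSpace ℝ (Fin n)) (EuclideanSpace ℝ (Fin n)) with hT1
  set T2 := ContinuousLinearMap.snd ℝ (EuclideanSpace ℝ (Fin n)) (EuclideanSpace ℝ (Fin n)) with hT2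
  have hsm2 : ContDiff ℝ (⊤ : ℕ∞) (fun q : E × E => p0 (T2 q)) := hp0.comp T2.contDiff
  have hsm1 : ContDiff ℝ (⊤ : ℕ∞) (fun q : E × E => V (T1 q)) := hV.comp T1.contDiff
  rw [pdsP_append]
  rcases eq_or_ne Lξ [] with hLξ | hLξ
  · subst hLξ
    simp only [List.map_nil, if_true]
    have hin : pdsP ([] : List (E × E)) (fun q : E × E => p0 q.2 + V q.1)
        = fun q : E × E => p0 q.2 + V q.1 := rfl
    rw [hin]
    rcases eq_or_ne Lx [] with hLx | hLx
    · subst hLx; simp [pdsP]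
    · simp only [if_neg hLx, if_pos rfl]
      have hsplit : pdsP (Lx.map fun i => ((EuclideanSpace.single i 1 : E), (0:E)))
          (fun q : E × E => p0 q.2 + V q.1)
          = fun q => pdsP (Lx.map fun i => ((EuclideanSpace.single i 1 : E), (0:E)))
              (fun q : E × E => p0 (T2 q)) q
            + pdsP (Lx.map fun i => ((EuclideanSpace.single i 1 : E), (0:E)))
              (fun q : E × E => V (T1 q)) q :=
        pdsP_add _ _ hsm2 hsm1 _
      rw [hsplit]
      rw [pdsP_comp_zero p0 hp0 T2 _ (fun i => rfl) Lx hLx]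
      rw [pdsP_comp V hV T1 _ (fun i => rfl) Lx]
      simp only [zero_add]
      rfl
  · simp only [if_neg hLξ]
    have hsplit : pdsP (Lξ.map fun i => ((0:E), (EuclideanSpace.single i 1 : E)))
        (fun q : E × E => p0 q.2 + V q.1)
        = fun q => pdsP (Lξ.map fun i => ((0:E), (EuclideanSpace.single i 1 : E)))
            (fun q : E × E => p0 (T2 q)) q
          + pdsP (Lξ.map fun i => ((0:E), (EuclideanSpace.single i 1 : E)))
            (fun q : E × E => V (T1 q)) q :=
      pdsP_add _ _ hsm2 hsm1 _
    rw [hsplit]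
    rw [pdsP_comp p0 hp0 T2 _ (fun i => rfl) Lξ]
    rw [pdsP_comp_zero V hV T1 _ (fun i => rfl) Lξ hLξ]
    have hinner : (fun q : E × E => pdsE Lξ p0 (T2 q) + (fun _ : E × E => (0:ℝ)) q)
        = fun q : E × E => pdsE Lξ p0 (T2 q) := by funext q; simp
    rw [hinner]
    rcases eq_or_ne Lx [] with hLx | hLx
    · subst hLx
      simp only [List.map_nil, if_pos rfl]
      rfl
    · simp only [if_neg hLx]
      rw [pdsP_comp_zero (pdsE Lξ p0) (contDiff_pdsE hp0 Lξ) T2 _ (fun i => rfl) Lx hLx]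


set_option maxHeartbeats 1000000 in
lemma caseD {n : ℕ} (m : ℝ) (hm : 0 < m) (k : ℕ) (hk : 0 < k)
    (μ : ℝ) (hμ0 : 0 < μ) (hμ : μ < 2 * k)
    (p0 : EuclideanSpace ℝ (Fin n) → ℝ)
    (hp0smooth : ContDiff ℝ (⊤ : ℕ∞) p0) (hp0nonneg : ∀ ξ, 0 ≤ p0 ξ)
    (ha : ∀ L : List (Fin n), ∃ C > (0 : ℝ), ∀ ξ,
      |pdsE L p0 ξ| ≤ C * jb ξ ^ (2 * m - (L.length : ℝ)))
    (V : EuclideanSpace ℝ (Fin n) → ℝ)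
    (c : ℝ) (hc0 : 0 < c)
    (hblow : ∀ ξ : EuclideanSpace ℝ (Fin n), 1 ≤ ‖ξ‖ → c * jb ξ ^ (2 * m) ≤ p0 ξ)
    (c' : ℝ) (hc'0 : 0 < c') (c'' : ℝ) (hc''0 : 0 < c'')
    (hcc : ∀ ξ : EuclideanSpace ℝ (Fin n), ‖ξ‖ ≤ 1 →
      c' * ‖ξ‖ ^ (2 * k) ≤ p0 ξ ∧ p0 ξ ≤ c'' * ‖ξ‖ ^ (2 * k))
    (C1 : ℝ) (hC10 : 0 < C1)
    (hV1 : ∀ x, C1 * jb x ^ (-μ) ≤ V x)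
    (hVpos : ∀ x : EuclideanSpace ℝ (Fin n), 0 < V x)
    (hppos : ∀ x ξ : EuclideanSpace ℝ (Fin n), 0 < p0 ξ + V x)
    (Lξ : List (Fin n)) (hLξ : Lξ ≠ []) :
    ∃ C > (0:ℝ), ∀ x ξ : EuclideanSpace ℝ (Fin n),
      |pdsE Lξ p0 ξ| ≤ C * (p0 ξ + V x) *
        jb x ^ ((μ / k) / 2 * (Lξ.length : ℝ)) * jb ξ ^ (-(Lξ.length : ℝ)) := by
  obtain ⟨Cb, hCb0, hCbb⟩ := ha Lξ
  set b : ℕ := Lξ.length with hbdef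
  set θ : ℝ := (μ/(k:ℝ))/2 * (b:ℝ) with hθdef
  have hk0 : (0:ℝ) < (k:ℝ) := by exact_mod_cast hk
  have hθ0 : 0 ≤ θ := by
    rw [hθdef]
    have hk0' : (0:ℝ) < (k:ℝ) := by exact_mod_cast hk
    exact mul_nonneg (div_nonneg (div_nonneg hμ0.le hk0'.le) (by norm_num)) (Nat.cast_nonneg b)
  have hjbx1 : ∀ x : EuclideanSpace ℝ (Fin n), (1:ℝ) ≤ jb x ^ θ := fun x => by
    have h := Real.rpow_le_rpow_of_exponent_le (Aux19.one_le_jb x) hθ0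
    rwa [Real.rpow_zero] at h
  have hOUT : ∀ x ξ : EuclideanSpace ℝ (Fin n), 1 ≤ ‖ξ‖ →
      |pdsE Lξ p0 ξ| ≤ (Cb/c) * (p0 ξ + V x) * jb x ^ θ * jb ξ ^ (-(b:ℝ)) := by
    intro x ξ hξ
    have h2 : jb ξ ^ (2*m - (b:ℝ)) = jb ξ ^ (2*m) * jb ξ ^ (-(b:ℝ)) := by
      rw [← Real.rpow_add (Aux19.jb_pos ξ)]
      ring_nf
    have h4 : jb ξ ^ (2*m) ≤ (p0 ξ + V x)/c := by
      rw [le_div_iff₀ hc0]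
      have h3 := hblow ξ hξ
      nlinarith [hVpos x]
    calc |pdsE Lξ p0 ξ| ≤ Cb * (jb ξ ^ (2*m) * jb ξ ^ (-(b:ℝ))) := by
          rw [← h2]; exact hCbb ξ
      _ ≤ Cb * ((p0 ξ + V x)/c * jb ξ ^ (-(b:ℝ))) := by
          apply mul_le_mul_of_nonneg_left _ hCb0.le
          exact mul_le_mul_of_nonneg_right h4 (Real.rpow_nonneg (Aux19.jb_pos ξ).le _)
      _ = (Cb/c) * (p0 ξ + V x) * 1 * jb ξ ^ (-(b:ℝ)) := by ring
      _ ≤ (Cb/c) * (p0 ξ + V x) * jb x ^ θ * jb ξ ^ (-(b:ℝ)) := by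
          have hA : 0 ≤ (Cb/c) * (p0 ξ + V x) := mul_nonneg (div_nonneg hCb0.le hc0.le) (hppos x ξ).le
          have hB : 0 ≤ jb ξ ^ (-(b:ℝ)) := Real.rpow_nonneg (Aux19.jb_pos ξ).le _
          nlinarith [mul_nonneg (mul_nonneg hA hB)
            (by linarith [hjbx1 x] : (0:ℝ) ≤ jb x ^ θ - 1)]
  have hXpos : ∀ x ξ : EuclideanSpace ℝ (Fin n),
      (0:ℝ) < (p0 ξ + V x) * jb x ^ θ * jb ξ ^ (-(b:ℝ)) := by
    intro x ξ
    have r1 := Real.rpow_pos_of_pos (Aux19.jb_pos x) θ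
    have r2 := Real.rpow_pos_of_pos (Aux19.jb_pos ξ) (-(b:ℝ))
    exact mul_pos (mul_pos (hppos x ξ) r1) r2
  rcases lt_or_ge b (2*k) with hblt | hbge
  · -- b < 2k : use the Landau bound on the unit ball + AM-GM
    obtain ⟨K0, hK00, hK0b⟩ := Aux19.uniform_bound m p0 ha (2*k)
    have hKT0 : (0:ℝ) < K0 * Real.sqrt 2 ^ |2*m - ((2*k:ℕ):ℝ)| := by
      have h0 : (0:ℝ) < Real.sqrt 2 := lt_of_lt_of_le one_pos Aux19.one_le_sqrt_two
      exact mul_pos hK00 (Real.rpow_pos_of_pos h0 _)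
    have hKball : ∀ L : List (Fin n), L.length = 2*k → ∀ ξ : EuclideanSpace ℝ (Fin n),
        ‖ξ‖ ≤ 1 → |pdsE L p0 ξ| ≤ K0 * Real.sqrt 2 ^ |2*m - ((2*k:ℕ):ℝ)| := by
      intro L hL ξ hξ
      refine (hK0b L hL ξ).trans ?_
      exact mul_le_mul_of_nonneg_left (Aux19.jb_rpow_le hξ _) hK00.le
    obtain ⟨CS, hCS0, hCSb⟩ := Aux19.landau k hk c'' hc''0 p0 hp0smooth hp0nonneg
      (fun ξ hξ => (hcc ξ hξ).2) _ hKT0 hKball (2*k - b)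
    set j : ℕ := 2*k - b with hjdef
    have hjb : b + j = 2*k := by omega
    have hsq2pos : (0:ℝ) < Real.sqrt 2 ^ |2*m - (b:ℝ)| :=
      Real.rpow_pos_of_pos (lt_of_lt_of_le one_pos Aux19.one_le_sqrt_two) _
    set C2 : ℝ := CS + Cb * Real.sqrt 2 ^ |2*m - (b:ℝ)| * (4:ℝ)^(j*j) with hC2def
    have hC20 : 0 < C2 := by
      have h4p : (0:ℝ) < (4:ℝ)^(j*j) := by positivity
      have := mul_pos (mul_pos hCb0 hsq2pos) h4p
      rw [hC2def]; linarith
    have hBALL : ∀ ξ : EuclideanSpace ℝ (Fin n), ‖ξ‖ ≤ 1 →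
        |pdsE Lξ p0 ξ| ≤ C2 * ‖ξ‖ ^ j := by
      intro ξ hξ
      rcases le_or_gt ‖ξ‖ ((4:ℝ)⁻¹^j) with hsm | hbig
      · refine (hCSb Lξ (by omega) ξ hsm).trans ?_
        have h0 : (0:ℝ) ≤ ‖ξ‖^j := by positivity
        have h4p : (0:ℝ) < (4:ℝ)^(j*j) := by positivity
        nlinarith [mul_nonneg (mul_nonneg (mul_nonneg hCb0.le hsq2pos.le) h4p.le) h0]
      · have h1 : |pdsE Lξ p0 ξ| ≤ Cb * Real.sqrt 2 ^ |2*m - (b:ℝ)| :=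
          (hCbb ξ).trans (mul_le_mul_of_nonneg_left (Aux19.jb_rpow_le hξ _) hCb0.le)
        have e2 : ((4:ℝ)^(j*j)) * (((4:ℝ)⁻¹^j)^j) = 1 := by
          rw [← pow_mul, ← mul_pow]
          norm_num
        have e1 : (((4:ℝ)⁻¹^j))^j ≤ ‖ξ‖^j := pow_le_pow_left₀ (by positivity) hbig.le j
        have e3 : (1:ℝ) ≤ (4:ℝ)^(j*j) * ‖ξ‖^j := by
          nlinarith [pow_pos (by norm_num : (0:ℝ)<4) (j*j)]
        calc |pdsE Lξ p0 ξ| ≤ Cb * Real.sqrt 2 ^ |2*m - (b:ℝ)| := h1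
          _ ≤ Cb * Real.sqrt 2 ^ |2*m - (b:ℝ)| * ((4:ℝ)^(j*j) * ‖ξ‖^j) :=
              le_mul_of_one_le_right (mul_nonneg hCb0.le hsq2pos.le) e3
          _ = (Cb * Real.sqrt 2 ^ |2*m - (b:ℝ)| * (4:ℝ)^(j*j)) * ‖ξ‖^j := by ring
          _ ≤ C2 * ‖ξ‖^j := by
              apply mul_le_mul_of_nonneg_right _ (by positivity)
              rw [hC2def]; linarith
    have hAM : ∀ x ξ : EuclideanSpace ℝ (Fin n),
        (‖ξ‖:ℝ) ^ j ≤ (‖ξ‖^(2*k) + jb x ^ (-μ)) * jb x ^ θ := by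
      intro x ξ
      have hs0 : (0:ℝ) ≤ ‖ξ‖ := norm_nonneg ξ
      have hw1 : (0:ℝ) ≤ (j:ℝ)/(2*(k:ℝ)) := by positivity
      have hw2 : (0:ℝ) ≤ (b:ℝ)/(2*(k:ℝ)) := by positivity
      have hjbcast : (j:ℝ) + (b:ℝ) = 2*(k:ℝ) := by
        have h' : ((j + b : ℕ):ℝ) = ((2*k : ℕ):ℝ) := by rw [show j + b = 2*k by omega]
        push_cast at h'
        linarith
      have hw : (j:ℝ)/(2*(k:ℝ)) + (b:ℝ)/(2*(k:ℝ)) = 1 := by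
        field_simp
        linarith
      have hp1 : (0:ℝ) ≤ ‖ξ‖^(2*k) * jb x ^ θ :=
        mul_nonneg (by positivity) (Real.rpow_nonneg (Aux19.jb_pos x).le _)
      have hp2 : (0:ℝ) ≤ jb x ^ (θ - μ) := Real.rpow_nonneg (Aux19.jb_pos x).le _
      have G := Real.geom_mean_le_arith_mean2_weighted hw1 hw2 hp1 hp2 hw
      have hid : (‖ξ‖^(2*k) * jb x ^ θ) ^ ((j:ℝ)/(2*(k:ℝ))) *
          (jb x ^ (θ - μ)) ^ ((b:ℝ)/(2*(k:ℝ))) = ‖ξ‖ ^ j := by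
        rw [Real.mul_rpow (by positivity) (Real.rpow_nonneg (Aux19.jb_pos x).le _)]
        rw [← Real.rpow_natCast ‖ξ‖ (2*k), ← Real.rpow_mul hs0,
          ← Real.rpow_mul (Aux19.jb_pos x).le, ← Real.rpow_mul (Aux19.jb_pos x).le]
        rw [mul_assoc, ← Real.rpow_add (Aux19.jb_pos x)]
        have eexp1 : ((2*k:ℕ):ℝ) * ((j:ℝ)/(2*(k:ℝ))) = (j:ℝ) := by
          push_cast
          field_simp
        have eexp2 : θ * ((j:ℝ)/(2*(k:ℝ))) + (θ - μ)*((b:ℝ)/(2*(k:ℝ))) = 0 := by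
          have hj' : (j:ℝ) = 2*(k:ℝ) - (b:ℝ) := by linarith
          rw [hθdef, hj']
          field_simp
          ring
        rw [eexp1, eexp2, Real.rpow_zero, mul_one, Real.rpow_natCast]
      rw [hid] at G
      refine G.trans ?_
      have hw1le : (j:ℝ)/(2*(k:ℝ)) ≤ 1 := by
        rw [div_le_one (by linarith : (0:ℝ) < 2*(k:ℝ))]
        nlinarith [Nat.cast_nonneg (α := ℝ) b]
      have hw2le : (b:ℝ)/(2*(k:ℝ)) ≤ 1 := by
        rw [div_le_one (by linarith : (0:ℝ) < 2*(k:ℝ))]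
        nlinarith [Nat.cast_nonneg (α := ℝ) j]
      have heq : jb x ^ (θ - μ) = jb x ^ (-μ) * jb x ^ θ := by
        rw [← Real.rpow_add (Aux19.jb_pos x)]
        ring_nf
      rw [heq] at hp2 ⊢
      nlinarith [hp1, hp2, hw1, hw2]
    have hmc0 : (0:ℝ) < min c' C1 := lt_min hc'0 hC10
    refine ⟨Cb/c + (C2/(min c' C1)) * Real.sqrt 2 ^ (b:ℕ),
      add_pos (div_pos hCb0 hc0) (mul_pos (div_pos hC20 hmc0)
        (pow_pos (lt_of_lt_of_le one_pos Aux19.one_le_sqrt_two) b)), fun x ξ => ?_⟩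
    show |pdsE Lξ p0 ξ| ≤ (Cb/c + (C2/(min c' C1)) * Real.sqrt 2 ^ (b:ℕ)) * (p0 ξ + V x) *
        jb x ^ θ * jb ξ ^ (-(b:ℝ))
    rcases le_or_gt 1 ‖ξ‖ with hout | hin
    · refine (hOUT x ξ hout).trans ?_
      have hmono : (Cb/c) ≤ Cb/c + (C2/(min c' C1)) * Real.sqrt 2 ^ (b:ℕ) := by
        have h0 : (0:ℝ) ≤ (C2/(min c' C1)) * Real.sqrt 2 ^ (b:ℕ) :=
          mul_nonneg (div_nonneg hC20.le hmc0.le) (pow_nonneg (Real.sqrt_nonneg 2) b)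
        linarith
      calc (Cb/c) * (p0 ξ + V x) * jb x ^ θ * jb ξ ^ (-(b:ℝ))
          = (Cb/c) * ((p0 ξ + V x) * jb x ^ θ * jb ξ ^ (-(b:ℝ))) := by ring
        _ ≤ (Cb/c + (C2/(min c' C1)) * Real.sqrt 2 ^ (b:ℕ)) *
            ((p0 ξ + V x) * jb x ^ θ * jb ξ ^ (-(b:ℝ))) :=
            mul_le_mul_of_nonneg_right hmono (hXpos x ξ).le
        _ = _ := by ring
    · have h1 := hBALL ξ hin.le
      have h2 := hAM x ξ
      have hmc : min c' C1 * (‖ξ‖^(2*k) + jb x ^ (-μ)) ≤ p0 ξ + V x := by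
        have l1 : c' * ‖ξ‖^(2*k) ≤ p0 ξ := (hcc ξ hin.le).1
        have l2 : C1 * jb x ^ (-μ) ≤ V x := hV1 x
        have m1 : min c' C1 ≤ c' := min_le_left _ _
        have m2 : min c' C1 ≤ C1 := min_le_right _ _
        have n1 : (0:ℝ) ≤ ‖ξ‖^(2*k) := by positivity
        have n2 : (0:ℝ) ≤ jb x ^ (-μ) := Real.rpow_nonneg (Aux19.jb_pos x).le _
        nlinarith
      have h3 : |pdsE Lξ p0 ξ| ≤ (C2/(min c' C1)) * (p0 ξ + V x) * jb x ^ θ := by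
        have step : ‖ξ‖^j ≤ ((p0 ξ + V x)/(min c' C1)) * jb x ^ θ := by
          refine h2.trans ?_
          apply mul_le_mul_of_nonneg_right _ (Real.rpow_nonneg (Aux19.jb_pos x).le _)
          rw [le_div_iff₀ hmc0]
          nlinarith [hmc]
        calc |pdsE Lξ p0 ξ| ≤ C2 * ‖ξ‖^j := h1
          _ ≤ C2 * (((p0 ξ + V x)/(min c' C1)) * jb x ^ θ) :=
              mul_le_mul_of_nonneg_left step hC20.le
          _ = (C2/(min c' C1)) * (p0 ξ + V x) * jb x ^ θ := by ring
      have h4 : (1:ℝ) ≤ Real.sqrt 2 ^ (b:ℕ) * jb ξ ^ (-(b:ℝ)) := by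
        have e1 : jb ξ ^ (-(b:ℝ)) = (jb ξ ^ (b:ℕ))⁻¹ := by
          rw [← Real.rpow_natCast (jb ξ) b, ← Real.rpow_neg (Aux19.jb_pos ξ).le]
        have e2 : jb ξ ^ (b:ℕ) ≤ Real.sqrt 2 ^ (b:ℕ) :=
          pow_le_pow_left₀ (Aux19.jb_pos ξ).le (Aux19.jb_le_sqrt_two hin.le) b
        have e3 : (0:ℝ) < jb ξ ^ (b:ℕ) := pow_pos (Aux19.jb_pos ξ) b
        rw [e1, ← div_eq_mul_inv, le_div_iff₀ e3, one_mul]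
        exact e2
      have hcore : (0:ℝ) ≤ (C2/(min c' C1)) * (p0 ξ + V x) * jb x ^ θ :=
        mul_nonneg (mul_nonneg (div_nonneg hC20.le hmc0.le) (hppos x ξ).le)
          (Real.rpow_nonneg (Aux19.jb_pos x).le θ)
      calc |pdsE Lξ p0 ξ| ≤ (C2/(min c' C1)) * (p0 ξ + V x) * jb x ^ θ := h3
        _ ≤ (C2/(min c' C1)) * (p0 ξ + V x) * jb x ^ θ *
            (Real.sqrt 2 ^ (b:ℕ) * jb ξ ^ (-(b:ℝ))) := le_mul_of_one_le_right hcore h4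
        _ = ((C2/(min c' C1)) * Real.sqrt 2 ^ (b:ℕ)) * ((p0 ξ + V x) * jb x ^ θ *
            jb ξ ^ (-(b:ℝ))) := by ring
        _ ≤ (Cb/c + (C2/(min c' C1)) * Real.sqrt 2 ^ (b:ℕ)) * ((p0 ξ + V x) * jb x ^ θ *
            jb ξ ^ (-(b:ℝ))) := by
            apply mul_le_mul_of_nonneg_right _ (hXpos x ξ).le
            have h0 : (0:ℝ) ≤ Cb/c := div_nonneg hCb0.le hc0.le
            linarith
        _ = _ := by ring
  · -- 2k ≤ b
    have h2m : ∀ ξ : EuclideanSpace ℝ (Fin n), ‖ξ‖ ≤ 1 → jb ξ ^ (2*m) ≤ (2:ℝ)^m := by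
      intro ξ hξ
      calc jb ξ ^ (2*m) ≤ Real.sqrt 2 ^ (2*m) :=
            Real.rpow_le_rpow (Aux19.jb_pos ξ).le (Aux19.jb_le_sqrt_two hξ) (by linarith)
        _ = (2:ℝ)^m := by
            rw [Real.sqrt_eq_rpow, ← Real.rpow_mul (by norm_num : (0:ℝ) ≤ 2)]
            congr 1
            ring
    have hθμ : μ ≤ θ := by
      have hbk : 2*(k:ℝ) ≤ (b:ℝ) := by exact_mod_cast hbge
      have e : θ = μ * (b:ℝ) / (2*(k:ℝ)) := by rw [hθdef]; ring
      rw [e, le_div_iff₀ (by linarith : (0:ℝ) < 2*(k:ℝ))]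
      nlinarith
    refine ⟨Cb/c + Cb*(2:ℝ)^m/C1, add_pos (div_pos hCb0 hc0)
      (div_pos (mul_pos hCb0 (Real.rpow_pos_of_pos two_pos m)) hC10), fun x ξ => ?_⟩
    show |pdsE Lξ p0 ξ| ≤ (Cb/c + Cb*(2:ℝ)^m/C1) * (p0 ξ + V x) * jb x ^ θ * jb ξ ^ (-(b:ℝ))
    rcases le_or_gt 1 ‖ξ‖ with hout | hin
    · refine (hOUT x ξ hout).trans ?_
      have hmono : (Cb/c) ≤ Cb/c + Cb*(2:ℝ)^m/C1 :=
        le_add_of_nonneg_right (div_nonneg (mul_nonneg hCb0.le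
          (Real.rpow_nonneg (by norm_num) m)) hC10.le)
      calc (Cb/c) * (p0 ξ + V x) * jb x ^ θ * jb ξ ^ (-(b:ℝ))
          = (Cb/c) * ((p0 ξ + V x) * jb x ^ θ * jb ξ ^ (-(b:ℝ))) := by ring
        _ ≤ (Cb/c + Cb*(2:ℝ)^m/C1) * ((p0 ξ + V x) * jb x ^ θ * jb ξ ^ (-(b:ℝ))) :=
            mul_le_mul_of_nonneg_right hmono (hXpos x ξ).le
        _ = _ := by ring
    · have h1 : |pdsE Lξ p0 ξ| ≤ Cb * (2:ℝ)^m * jb ξ ^ (-(b:ℝ)) := by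
        have h2' : jb ξ ^ (2*m - (b:ℝ)) = jb ξ ^ (2*m) * jb ξ ^ (-(b:ℝ)) := by
          rw [← Real.rpow_add (Aux19.jb_pos ξ)]
          ring_nf
        calc |pdsE Lξ p0 ξ| ≤ Cb * (jb ξ ^ (2*m) * jb ξ ^ (-(b:ℝ))) := by
              rw [← h2']; exact hCbb ξ
          _ ≤ Cb * ((2:ℝ)^m * jb ξ ^ (-(b:ℝ))) := by
              apply mul_le_mul_of_nonneg_left _ hCb0.le
              exact mul_le_mul_of_nonneg_right (h2m ξ hin.le)
                (Real.rpow_nonneg (Aux19.jb_pos ξ).le _)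
          _ = Cb * (2:ℝ)^m * jb ξ ^ (-(b:ℝ)) := by ring
      have s5 : (0:ℝ) ≤ jb x ^ θ := Real.rpow_nonneg (Aux19.jb_pos x).le _
      have s4 : C1 ≤ (p0 ξ + V x) * jb x ^ θ := by
        have s1 := hV1 x
        have s2 : jb x ^ (-μ) * jb x ^ θ = jb x ^ (θ - μ) := by
          rw [← Real.rpow_add (Aux19.jb_pos x)]
          ring_nf
        have s3 : (1:ℝ) ≤ jb x ^ (θ - μ) := by
          have h := Real.rpow_le_rpow_of_exponent_le (Aux19.one_le_jb x)
            (by linarith : (0:ℝ) ≤ θ - μ)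
          rwa [Real.rpow_zero] at h
        have t0 := mul_le_mul_of_nonneg_right s1 s5
        have t4 : V x * jb x ^ θ ≤ (p0 ξ + V x) * jb x ^ θ :=
          mul_le_mul_of_nonneg_right (by linarith [hp0nonneg ξ]) s5
        nlinarith [s3, hC10, t0, t4, s2]
      have h3 : Cb * (2:ℝ)^m ≤ (Cb*(2:ℝ)^m/C1) * ((p0 ξ + V x) * jb x ^ θ) := by
        calc Cb * (2:ℝ)^m = (Cb*(2:ℝ)^m/C1) * C1 := (div_mul_cancel₀ _ hC10.ne').symm
          _ ≤ (Cb*(2:ℝ)^m/C1) * ((p0 ξ + V x) * jb x ^ θ) :=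
              mul_le_mul_of_nonneg_left s4 (div_nonneg (mul_nonneg hCb0.le
                (Real.rpow_nonneg (by norm_num) m)) hC10.le)
      calc |pdsE Lξ p0 ξ| ≤ Cb * (2:ℝ)^m * jb ξ ^ (-(b:ℝ)) := h1
        _ ≤ ((Cb*(2:ℝ)^m/C1) * ((p0 ξ + V x) * jb x ^ θ)) * jb ξ ^ (-(b:ℝ)) :=
            mul_le_mul_of_nonneg_right h3 (Real.rpow_nonneg (Aux19.jb_pos ξ).le _)
        _ = (Cb*(2:ℝ)^m/C1) * ((p0 ξ + V x) * jb x ^ θ * jb ξ ^ (-(b:ℝ))) := by ring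
        _ ≤ (Cb/c + Cb*(2:ℝ)^m/C1) * ((p0 ξ + V x) * jb x ^ θ * jb ξ ^ (-(b:ℝ))) := by
            apply mul_le_mul_of_nonneg_right _ (hXpos x ξ).le
            have hn0 : (0:ℝ) ≤ Cb/c := div_nonneg hCb0.le hc0.le
            linarith
        _ = _ := by ring

end Aux19

theorem stmt19 {n : ℕ} (hn : 1 ≤ n) (m : ℝ) (hm : 0 < m) (k : ℕ) (hk : 0 < k)
    (μ : ℝ) (hμ0 : 0 < μ) (hμ : μ < 2 * k)
    (p0 : EuclideanSpace ℝ (Fin n) → ℝ)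
    (hp0smooth : ContDiff ℝ (⊤ : ℕ∞) p0) (hp0nonneg : ∀ ξ, 0 ≤ p0 ξ)
    (ha : ∀ L : List (Fin n), ∃ C > (0 : ℝ), ∀ ξ,
      |pdsE L p0 ξ| ≤ C * jb ξ ^ (2 * m - (L.length : ℝ)))
    (hb : ∃ c > (0 : ℝ), ∀ ξ : EuclideanSpace ℝ (Fin n), 1 ≤ ‖ξ‖ →
      c * jb ξ ^ (2 * m) ≤ p0 ξ)
    (hc : ∃ c' > (0 : ℝ), ∃ c'' > (0 : ℝ), ∀ ξ : EuclideanSpace ℝ (Fin n), ‖ξ‖ ≤ 1 →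
      c' * ‖ξ‖ ^ (2 * k) ≤ p0 ξ ∧ p0 ξ ≤ c'' * ‖ξ‖ ^ (2 * k))
    (V : EuclideanSpace ℝ (Fin n) → ℝ) (hVsmooth : ContDiff ℝ (⊤ : ℕ∞) V)
    (hVa : ∀ L : List (Fin n), ∃ C > (0 : ℝ), ∀ x,
      |pdsE L V x| ≤ C * jb x ^ (-μ - (L.length : ℝ)))
    (hVlow : ∃ C1 > (0 : ℝ), ∀ x, C1 * jb x ^ (-μ) ≤ V x) :
    ∀ Lx Lξ : List (Fin n), ∃ C > (0 : ℝ), ∀ x ξ : EuclideanSpace ℝ (Fin n),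
      |pdsP
          ((Lx.map fun i =>
              ((EuclideanSpace.single i 1 : EuclideanSpace ℝ (Fin n)),
                (0 : EuclideanSpace ℝ (Fin n)))) ++
            (Lξ.map fun i =>
              ((0 : EuclideanSpace ℝ (Fin n)),
                (EuclideanSpace.single i 1 : EuclideanSpace ℝ (Fin n)))))
          (fun q => p0 q.2 + V q.1) (x, ξ)| ≤
        C * (p0 ξ + V x) * jb x ^ ((μ / k) / 2 * (Lξ.length : ℝ) - (Lx.length : ℝ)) *
          jb ξ ^ (-(Lξ.length : ℝ)) := by
  classical
  obtain ⟨c, hc0, hblow⟩ := hb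
  obtain ⟨c', hc'0, c'', hc''0, hcc⟩ := hc
  obtain ⟨C1, hC10, hV1⟩ := hVlow
  have hVpos : ∀ x : EuclideanSpace ℝ (Fin n), 0 < V x := fun x =>
    lt_of_lt_of_le (mul_pos hC10 (Real.rpow_pos_of_pos (Aux19.jb_pos x) _)) (hV1 x)
  have hppos : ∀ x ξ : EuclideanSpace ℝ (Fin n), 0 < p0 ξ + V x := fun x ξ =>
    add_pos_of_nonneg_of_pos (hp0nonneg ξ) (hVpos x)
  intro Lx Lξ
  rcases eq_or_ne Lξ [] with hLξ | hLξ
  · rcases eq_or_ne Lx [] with hLx | hLx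
    · -- case A : both empty
      refine ⟨1, one_pos, fun x ξ => ?_⟩
      rw [Aux19.pdsP_value p0 V hp0smooth hVsmooth Lx Lξ x ξ, if_pos hLξ, if_pos hLx]
      subst hLξ hLx
      simp only [List.length_nil, Nat.cast_zero, mul_zero, zero_sub, neg_zero, Real.rpow_zero,
        mul_one, one_mul]
      rw [abs_of_pos (hppos x ξ)]
    · -- case B : Lx ≠ [], Lξ = []
      obtain ⟨CV, hCV0, hCVb⟩ := hVa Lx
      refine ⟨CV / C1, by positivity, fun x ξ => ?_⟩
      rw [Aux19.pdsP_value p0 V hp0smooth hVsmooth Lx Lξ x ξ, if_pos hLξ, if_neg hLx]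
      subst hLξ
      simp only [List.length_nil, Nat.cast_zero, mul_zero, zero_sub, neg_zero, Real.rpow_zero,
        mul_one]
      have h1 := hCVb x
      have h2 : jb x ^ (-μ - (Lx.length:ℝ)) = jb x ^ (-μ) * jb x ^ (-(Lx.length:ℝ)) := by
        rw [← Real.rpow_add (Aux19.jb_pos x)]
        ring_nf
      have h5 : jb x ^ (-μ) ≤ (p0 ξ + V x)/C1 := by
        rw [le_div_iff₀ hC10]
        have h3 := hV1 x
        nlinarith [hp0nonneg ξ]
      calc |pdsE Lx V x| ≤ CV * (jb x ^ (-μ) * jb x ^ (-(Lx.length:ℝ))) := by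
            rw [← h2]; exact h1
        _ ≤ CV * ((p0 ξ + V x)/C1 * jb x ^ (-(Lx.length:ℝ))) := by
            apply mul_le_mul_of_nonneg_left _ hCV0.le
            exact mul_le_mul_of_nonneg_right h5 (Real.rpow_nonneg (Aux19.jb_pos x).le _)
        _ = CV/C1 * (p0 ξ + V x) * jb x ^ (-(Lx.length:ℝ)) := by ring
  · rcases eq_or_ne Lx [] with hLx | hLx
    · -- case D : Lx = [], Lξ ≠ [] (the main case)
      subst hLx
      obtain ⟨C, hC0, hCb⟩ := Aux19.caseD m hm k hk μ hμ0 hμ p0 hp0smooth hp0nonneg ha V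
        c hc0 hblow c' hc'0 c'' hc''0 hcc C1 hC10 hV1 hVpos hppos Lξ hLξ
      refine ⟨C, hC0, fun x ξ => ?_⟩
      rw [Aux19.pdsP_value p0 V hp0smooth hVsmooth [] Lξ x ξ, if_neg hLξ, if_pos rfl]
      simp only [List.length_nil, Nat.cast_zero, sub_zero]
      exact hCb x ξ
    · -- case C : both nonempty
      refine ⟨1, one_pos, fun x ξ => ?_⟩
      rw [Aux19.pdsP_value p0 V hp0smooth hVsmooth Lx Lξ x ξ, if_neg hLξ, if_neg hLx]
      simp only [abs_zero]
      have r1 : (0:ℝ) ≤ jb x ^ ((μ/(k:ℝ))/2 * (Lξ.length:ℝ) - (Lx.length:ℝ)) :=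
        Real.rpow_nonneg (Aux19.jb_pos x).le _
      have r2 : (0:ℝ) ≤ jb ξ ^ (-(Lξ.length:ℝ)) := Real.rpow_nonneg (Aux19.jb_pos ξ).le _
      have := (hppos x ξ).le
      positivity
end
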